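/- Let G = (V, E) be the graph with vertices V = {(1),(2),(3)} ∪ {(j,k) : j ≠ k ∈ {1,2,3}} and edges {(j),(k,j)} for all j ≠ k and {(j,k),(k,j)} for j < k, and let E′ be the set of pairs of distinct vertices not adjacent in G. Suppose y ∈ (O_K ∖ {0})^V (write y_j = y_{(j)}, y_{j,k} = y_{(j,k)}) satisfies gcd(y_u, y_v) = 1 for all {u,v} ∈ E′. Define x₀ = y₁y₂y₃ y_{1,2}y_{2,1}y_{1,3}y_{3,1}y_{2,3}y_{3,2} and x_j = y_j³ y_{j,k} y_{j,l} y_{k,j}² y_{l,j}² for {j,k,l} = {1,2,3}. Then x₀³ = x₁x₂x₃, gcd(x₀, x₁, x₂, x₃) = 1 in O_K, and ‖x₀‖_∞ ≤ max{‖x₁‖_∞, ‖x₂‖_∞, ‖x₃‖_∞}. -/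

import Mathlib

open NumberField

/-- The six ordered pairs `(j,k)` with `j ≠ k ∈ {1,2,3}`. -/
abbrev Pair : Type := {p : Fin 3 × Fin 3 // p.1 ≠ p.2}

/-- The nine vertices `V = {(1),(2),(3)} ∪ {(j,k) : j ≠ k}` of the graph `G`. -/
abbrev Vtx : Type := Fin 3 ⊕ Pair

/-- `rel u v` holds for the edges `{(j),(k,j)}` (for all `j ≠ k`) and `{(j,k),(k,j)}`. -/
def rel : Vtx → Vtx → Bool
  | Sum.inl j, Sum.inr p => p.1.2 == j
  | Sum.inr p, Sum.inr q => q.1.1 == p.1.2 && q.1.2 == p.1.1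
  | _, _ => false

/-- Adjacency in the graph `G = (V,E)` with the nine edges `{(j),(k,j)}` (`j ≠ k`) and
`{(j,k),(k,j)}` (`j < k`). -/
def adj (u v : Vtx) : Bool := rel u v || rel v u

/-- The coordinate `x_j = y_j³ y_{j,k} y_{j,l} y_{k,j}² y_{l,j}²` for `{j,k,l} = {1,2,3}`. -/
def coordX {R : Type*} [CommRing R] (y : Vtx → R) (j k l : Fin 3)
    (hjk : j ≠ k) (hjl : j ≠ l) : R :=
  y (Sum.inl j) ^ 3 * y (Sum.inr ⟨(j, k), hjk⟩) * y (Sum.inr ⟨(j, l), hjl⟩) *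
    y (Sum.inr ⟨(k, j), hjk.symm⟩) ^ 2 * y (Sum.inr ⟨(l, j), hjl.symm⟩) ^ 2

/-!
The identity `x₀³ = x₁x₂x₃` is a monomial identity: every `y_v` occurs three times on each
side. For coprimality, let `𝔭` be a maximal ideal containing `x₁, x₂, x₃`. Each `x_j ∈ 𝔭` forces
some `y_v ∈ 𝔭` with `v` in the five-vertex support of `x_j`, and two such vertices are never
distinct and non-adjacent, since their `y`'s are coprime. But `G` is a 9-cycle, and no vertex or
edge of it meets all three supports (checked by `decide`). The norm bound holds because
`‖x₀‖³ = ‖x₁‖‖x₂‖‖x₃‖` is at most the cube of the largest factor.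
-/

def coordSupport (j k l : Fin 3) (hjk : j ≠ k) (hjl : j ≠ l) : Finset Vtx :=
  {Sum.inl j, Sum.inr ⟨(j, k), hjk⟩, Sum.inr ⟨(j, l), hjl⟩, Sum.inr ⟨(k, j), hjk.symm⟩,
    Sum.inr ⟨(l, j), hjl.symm⟩}

lemma prod_vtx_pow_three_eq_coordX_mul {R : Type*} [CommRing R] (y : Vtx → R) :
    (∏ v, y v) ^ 3 =
      coordX y 0 1 2 (by decide) (by decide) * coordX y 1 2 0 (by decide) (by decide) *
        coordX y 2 0 1 (by decide) (by decide) := by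
  have huniv : (Finset.univ : Finset Pair) =
      {⟨(0, 1), by decide⟩, ⟨(0, 2), by decide⟩, ⟨(1, 0), by decide⟩,
       ⟨(1, 2), by decide⟩, ⟨(2, 0), by decide⟩, ⟨(2, 1), by decide⟩} := by decide
  rw [Fintype.prod_sum_type, Fin.prod_univ_three, huniv, Finset.prod_insert (by decide),
    Finset.prod_insert (by decide), Finset.prod_insert (by decide), Finset.prod_insert (by decide),
    Finset.prod_insert (by decide), Finset.prod_singleton]
  unfold coordX
  ring

lemma exists_mem_coordSupport_of_coordX_mem {R : Type*} [CommRing R] {P : Ideal R}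
    (hP : P.IsPrime) (y : Vtx → R) (j k l : Fin 3) (hjk : j ≠ k) (hjl : j ≠ l)
    (h : coordX y j k l hjk hjl ∈ P) : ∃ v ∈ coordSupport j k l hjk hjl, y v ∈ P := by
  simpa [coordX, coordSupport, hP.mul_mem_iff_mem_or_mem, hP.pow_mem_iff_mem, or_assoc] using h

lemma exists_nonadjacent_of_mem_coordSupport :
    ∀ a ∈ coordSupport 0 1 2 (by decide) (by decide),
    ∀ b ∈ coordSupport 1 2 0 (by decide) (by decide),
    ∀ c ∈ coordSupport 2 0 1 (by decide) (by decide),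
      ∃ u ∈ ({a, b, c} : Finset Vtx), ∃ v ∈ ({a, b, c} : Finset Vtx), u ≠ v ∧ adj u v = false := by
  decide

lemma span_coordX_eq_top {R : Type*} [CommRing R] (y : Vtx → R)
    (hcop : ∀ u v : Vtx, u ≠ v → adj u v = false → IsCoprime (y u) (y v)) :
    Ideal.span {coordX y 0 1 2 (by decide) (by decide), coordX y 1 2 0 (by decide) (by decide),
      coordX y 2 0 1 (by decide) (by decide)} = ⊤ := by
  by_contra hne
  obtain ⟨P, hPmax, hle⟩ := Ideal.exists_le_maximal _ hne
  have hP := hPmax.isPrime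
  have mem {z : R} (hz : z ∈ ({_, _, _} : Set R)) : z ∈ P := hle (Ideal.subset_span hz)
  obtain ⟨a, ha, hya⟩ := exists_mem_coordSupport_of_coordX_mem hP y 0 1 2 _ _ (mem (by simp))
  obtain ⟨b, hb, hyb⟩ := exists_mem_coordSupport_of_coordX_mem hP y 1 2 0 _ _ (mem (by simp))
  obtain ⟨c, hc, hyc⟩ := exists_mem_coordSupport_of_coordX_mem hP y 2 0 1 _ _ (mem (by simp))
  obtain ⟨u, hu, v, hv, huv, hadj⟩ := exists_nonadjacent_of_mem_coordSupport a ha b hb c hc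
  have hmem {w : Vtx} (hw : w ∈ ({a, b, c} : Finset Vtx)) : y w ∈ P := by
    simp only [Finset.mem_insert, Finset.mem_singleton] at hw
    rcases hw with rfl | rfl | rfl <;> assumption
  exact Ideal.IsPrime.notMem_of_isCoprime_of_mem (hcop u v huv hadj) (hmem hu) (hmem hv)

lemma le_max_of_pow_three_eq_mul {R : Type*} [CommSemiring R] [LinearOrder R]
    [IsStrictOrderedRing R] {a b c d : R} (hb : 0 ≤ b) (hc : 0 ≤ c) (hd : 0 ≤ d)
    (h : a ^ 3 = b * c * d) : a ≤ max b (max c d) := by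
  set M := max b (max c d)
  have hM : 0 ≤ M := hb.trans (le_max_left _ _)
  refine le_of_pow_le_pow_left₀ three_ne_zero hM ?_
  calc a ^ 3 = b * c * d := h
    _ ≤ M * M * M := by gcongr <;> simp [M]
    _ = M ^ 3 := by ring

/-- if `y ∈ (𝓞_K ∖ {0})^V` satisfies `gcd(y_u, y_v) = 1` for all pairs
`{u,v}` of distinct vertices not adjacent in `G`, then
`x₀ = y₁y₂y₃y_{1,2}y_{2,1}y_{1,3}y_{3,1}y_{2,3}y_{3,2}` and
`x_j = y_j³y_{j,k}y_{j,l}y_{k,j}²y_{l,j}²` satisfy `x₀³ = x₁x₂x₃`,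
`gcd(x₀,x₁,x₂,x₃) = 1` and `‖x₀‖_∞ ≤ max{‖x₁‖_∞, ‖x₂‖_∞, ‖x₃‖_∞}`. -/
theorem stmt19 (K : Type) [Field K] [NumberField K]
    (ι : K →+* ℂ)
    (nrm : 𝓞 K → ℝ) (hnrm : ∀ x : 𝓞 K, nrm x = ‖ι (x : K)‖ ^ 2)
    (y : Vtx → 𝓞 K)
    (hcop : ∀ u v : Vtx, u ≠ v → adj u v = false → IsCoprime (y u) (y v))
    (x : Fin 4 → 𝓞 K)
    (hx0 : x 0 = ∏ v : Vtx, y v)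
    (hx1 : x 1 = coordX y 0 1 2 (by decide) (by decide))
    (hx2 : x 2 = coordX y 1 2 0 (by decide) (by decide))
    (hx3 : x 3 = coordX y 2 0 1 (by decide) (by decide)) :
    x 0 ^ 3 = x 1 * x 2 * x 3 ∧
    Ideal.span {x 0, x 1, x 2, x 3} = (⊤ : Ideal (𝓞 K)) ∧
    nrm (x 0) ≤ max (nrm (x 1)) (max (nrm (x 2)) (nrm (x 3))) := by
  have hcube : x 0 ^ 3 = x 1 * x 2 * x 3 := by
    rw [hx0, hx1, hx2, hx3, prod_vtx_pow_three_eq_coordX_mul]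
  have hspan : Ideal.span {x 1, x 2, x 3} = ⊤ := by
    rw [hx1, hx2, hx3, span_coordX_eq_top y hcop]
  have hnrm_mul (a b : 𝓞 K) : nrm (a * b) = nrm a * nrm b := by
    simp only [hnrm, map_mul, norm_mul, mul_pow]
  refine ⟨hcube, top_le_iff.mp (hspan ▸ Ideal.span_mono (Set.subset_insert _ _)), ?_⟩
  refine le_max_of_pow_three_eq_mul (by simp [hnrm]) (by simp [hnrm]) (by simp [hnrm]) ?_
  rw [← hnrm_mul, ← hnrm_mul, ← hcube]
  simp only [pow_three, hnrm_mul]
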